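/- Let H = ⟨η⟩ ⊆ K* be a finite cyclic group, a₁,…,a_r ∈ ℤ, d_i the order of η^{a_i}, D = diag(d₁,…,d_r), and β : ℤ^r → A the grading map. Let Y = Y_{A,H} = {[t₁^{a₁}:⋯:t_r^{a_r}] : t_i ∈ H} ⊆ T_X be the degenerate torus. Then the vanishing ideal of Y is the lattice ideal I_L for the lattice L = D(L_{βD}), where L_{βD} = Ker(β∘D) = {m ∈ ℤ^r : β(Dm) = 0}. -/

import Mathlib

open MvPolynomial

/-- The exponent vector of the positive part `m⁺` of an integer vector. -/
noncomputable def expOf {r : ℕ} (m : Fin r → ℤ) : Fin r →₀ ℕ :=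
  Finsupp.equivFunOnFinite.symm fun i => (m i).toNat

/-- The binomial `F_m = x^{m⁺} - x^{m⁻}`. -/
noncomputable def latticeBinomial (K : Type*) [Field K] {r : ℕ} (m : Fin r → ℤ) :
    MvPolynomial (Fin r) K :=
  monomial (expOf m) 1 - monomial (expOf (-m)) 1

/-- The lattice ideal `I_L` of a lattice `L ⊆ ℤ^r`. -/
noncomputable def latticeIdeal (K : Type*) [Field K] {r : ℕ} (L : AddSubgroup (Fin r → ℤ)) :
    Ideal (MvPolynomial (Fin r) K) :=
  Ideal.span {f | ∃ m ∈ L, f = latticeBinomial K m}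

/-- Degree of a monomial exponent under the grading `β`. -/
def degOf {A : Type*} [AddCommGroup A] {r : ℕ} (β : (Fin r → ℤ) →+ A) (d : Fin r →₀ ℕ) : A :=
  β fun i => (d i : ℤ)

/-- `f` is homogeneous of degree `α` with respect to `β`. -/
def IsHomogOf {A : Type*} [AddCommGroup A] {K : Type*} [Field K] {r : ℕ}
    (β : (Fin r → ℤ) →+ A) (α : A) (f : MvPolynomial (Fin r) K) : Prop :=
  ∀ d ∈ f.support, degOf β d = α

/-- `f` is homogeneous with respect to `β`. -/
def IsHomog {A : Type*} [AddCommGroup A] {K : Type*} [Field K] {r : ℕ}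
    (β : (Fin r → ℤ) →+ A) (f : MvPolynomial (Fin r) K) : Prop :=
  ∃ α, IsHomogOf β α f

/-- An ideal is homogeneous if it is generated by homogeneous polynomials. -/
def IsHomogIdeal {A : Type*} [AddCommGroup A] {K : Type*} [Field K] {r : ℕ}
    (β : (Fin r → ℤ) →+ A) (I : Ideal (MvPolynomial (Fin r) K)) : Prop :=
  ∃ S : Set (MvPolynomial (Fin r) K), (∀ f ∈ S, IsHomog β f) ∧ I = Ideal.span S

/-- `x^m(P) = ∏ᵢ Pᵢ^{mᵢ}` as a unit. -/
def charEval {K : Type*} [Field K] {r : ℕ} (P : Fin r → Kˣ) (m : Fin r → ℤ) : Kˣ :=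
  ∏ i, (P i) ^ (m i)

/-- The group `G = Ker π`, consisting of the points where all characters coming
from `Ker β` take the value `1`. -/
def torusG {K : Type*} [Field K] {A : Type*} [AddCommGroup A] {r : ℕ}
    (β : (Fin r → ℤ) →+ A) : Subgroup (Fin r → Kˣ) where
  carrier := {g | ∀ m ∈ β.ker, charEval g m = 1}
  one_mem' := by intro m hm; simp [charEval]
  mul_mem' := by
    intro a b ha hb m hm
    have : charEval (a * b) m = charEval a m * charEval b m := by
      simp [charEval, mul_zpow, Finset.prod_mul_distrib]
    rw [this, ha m hm, hb m hm, one_mul]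
  inv_mem' := by
    intro a ha m hm
    have : charEval a⁻¹ m = (charEval a m)⁻¹ := by
      simp [charEval, inv_zpow]
    rw [this, ha m hm, inv_one]

/-- The vanishing ideal of a set of torus points, generated by the homogeneous
polynomials vanishing on it. -/
noncomputable def vanishingIdeal {K : Type*} [Field K] {A : Type*} [AddCommGroup A] {r : ℕ}
    (β : (Fin r → ℤ) →+ A) (Y : Set ((Fin r → Kˣ) ⧸ torusG (K := K) β)) :
    Ideal (MvPolynomial (Fin r) K) :=
  Ideal.span {f | IsHomog β f ∧
    ∀ P : Fin r → Kˣ, (QuotientGroup.mk P ∈ Y) → eval (fun i => (P i : K)) f = 0}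

/-- Height of an ideal: infimum of heights of primes containing it. -/
noncomputable def idealHeight {R : Type*} [CommRing R] (I : Ideal R) : ℕ∞ :=
  ⨅ (p : PrimeSpectrum R) (_ : I ≤ p.asIdeal), Order.height p

/-- A homogeneous ideal is a complete intersection if it is generated by a regular
sequence of homogeneous polynomials whose length is the height of the ideal. -/
def IsCompleteIntersection {K : Type*} [Field K] {A : Type*} [AddCommGroup A] {r : ℕ}
    (β : (Fin r → ℤ) →+ A) (I : Ideal (MvPolynomial (Fin r) K)) : Prop :=
  ∃ (k : ℕ) (f : Fin k → MvPolynomial (Fin r) K),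
    (∀ i, IsHomog β (f i)) ∧
    RingTheory.Sequence.IsRegular (MvPolynomial (Fin r) K) (List.ofFn f) ∧
    I = Ideal.span (Set.range f) ∧ (k : ℕ∞) = idealHeight I

/-- The diagonal map `D = diag(d₁,…,d_r)` acting on `ℤ^r`. -/
def Dhom {r : ℕ} (d : Fin r → ℕ) : (Fin r → ℤ) →+ (Fin r → ℤ) where
  toFun m := fun i => (d i : ℤ) * m i
  map_zero' := by funext i; simp
  map_add' a b := by funext i; simp [mul_add]

/-!
A binomial `F_m` with `m ∈ L` vanishes on `Y` because `x^m` is trivial there: at a point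
`g · (tᵢ^{aᵢ})ᵢ` with `g ∈ G` we have `x^m(g) = 1` since `β m = 0`, and `x^m((tᵢ^{aᵢ})ᵢ) = 1`
since each `mᵢ` is a multiple of the order `dᵢ` of `η^{aᵢ}`. Conversely, pull a homogeneous
`f = ∑ c_u x^u` vanishing on `Y` back along the parametrization `k ↦ (η^{kᵢ aᵢ})ᵢ` of `Y` by
`ℤ^r`. Each monomial becomes a character of `ℤ^r`, so Dedekind's independence of characters
forces the coefficients of every class of monomials inducing the same character to sum to zero.
Two monomials `x^u`, `x^v` in such a class satisfy `dᵢ ∣ uᵢ - vᵢ`, and `β(u - v) = 0` by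
homogeneity, so `u - v ∈ L` and `x^u - x^v ∈ I_L`; hence `f` is a combination of such binomials.
-/

section Fiberwise

variable {σ R : Type*} [CommRing R] {I : Ideal (MvPolynomial σ R)}

theorem sum_monomial_mem_of_sum_eq_zero (s : Finset (σ →₀ ℕ)) (c : (σ →₀ ℕ) → R)
    (v : σ →₀ ℕ) (hv : ∀ u ∈ s, monomial u 1 - monomial v 1 ∈ I) (hc : ∑ u ∈ s, c u = 0) :
    ∑ u ∈ s, monomial u (c u) ∈ I := by
  have h : ∑ u ∈ s, monomial u (c u) = ∑ u ∈ s, C (c u) * (monomial u 1 - monomial v 1) := by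
    simp only [mul_sub, C_mul_monomial, mul_one, Finset.sum_sub_distrib]
    rw [← map_sum (monomial v), hc, map_zero, sub_zero]
  rw [h]
  exact Ideal.sum_mem _ fun u hu => Ideal.mul_mem_left _ _ (hv u hu)

theorem mem_of_sum_coeff_fiber_eq_zero {X : Type*} [DecidableEq X] (f : MvPolynomial σ R)
    (χ : (σ →₀ ℕ) → X)
    (hbin : ∀ u ∈ f.support, ∀ v ∈ f.support, χ u = χ v → monomial u 1 - monomial v 1 ∈ I)
    (hfiber : ∀ x, ∑ u ∈ f.support with χ u = x, coeff u f = 0) : f ∈ I := by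
  rw [← support_sum_monomial_coeff f,
    ← Finset.sum_fiberwise_of_maps_to fun u hu => Finset.mem_image_of_mem χ hu]
  refine Ideal.sum_mem _ fun x hx => ?_
  obtain ⟨v, hv, rfl⟩ := Finset.mem_image.mp hx
  refine sum_monomial_mem_of_sum_eq_zero _ _ v (fun u hu => ?_) (hfiber _)
  rw [Finset.mem_filter] at hu
  exact hbin u hu.1 v hv hu.2

end Fiberwise

section MonomialCharacters

variable {G σ K : Type*} [Monoid G] [Field K]

theorem sum_fiber_eq_zero_of_sum_mul_eq_zero {ι : Type*} [DecidableEq (G →* K)]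
    {s : Finset ι} {c : ι → K} {χ : ι → G →* K} (h : ∀ g, ∑ i ∈ s, c i * χ i g = 0)
    (φ : G →* K) : ∑ i ∈ s with χ i = φ, c i = 0 := by
  by_cases hφ : φ ∈ s.image χ
  · refine linearIndependent_iff'.mp (linearIndependent_monoidHom G K) (s.image χ)
      (fun φ => ∑ i ∈ s with χ i = φ, c i) ?_ φ hφ
    funext g
    simp only [Finset.sum_apply, Pi.smul_apply, smul_eq_mul, Finset.sum_mul, Pi.zero_apply]
    rw [← h g, ← Finset.sum_fiberwise_of_maps_to fun i hi => Finset.mem_image_of_mem χ hi]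
    refine Finset.sum_congr rfl fun ψ _ => Finset.sum_congr rfl fun i hi => ?_
    rw [(Finset.mem_filter.mp hi).2]
  · refine Finset.sum_eq_zero fun i hi => absurd ?_ hφ
    rw [Finset.mem_filter] at hi
    exact hi.2 ▸ Finset.mem_image_of_mem χ hi.1

def monomialChar (ρ : G →* (σ → Kˣ)) (u : σ →₀ ℕ) : G →* K where
  toFun g := u.prod fun i n => (ρ g i : K) ^ n
  map_one' := by simp
  map_mul' g h := by simp [mul_pow, Finsupp.prod_mul]

theorem eval_eq_sum_monomialChar (ρ : G →* (σ → Kˣ)) (f : MvPolynomial σ K) (g : G) :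
    eval (fun i => (ρ g i : K)) f = ∑ u ∈ f.support, coeff u f * monomialChar ρ u g :=
  eval_eq _ _

end MonomialCharacters

section DegenerateTorus

variable {K : Type*} [Field K] {A : Type*} [AddCommGroup A] {r : ℕ}

theorem mem_map_Dhom_ker_iff (β : (Fin r → ℤ) →+ A) (d : Fin r → ℕ) (m : Fin r → ℤ) :
    m ∈ AddSubgroup.map (Dhom d) (AddMonoidHom.ker (β.comp (Dhom d))) ↔
      β m = 0 ∧ ∀ i, (d i : ℤ) ∣ m i := by
  constructor
  · rintro ⟨n, hn, rfl⟩
    exact ⟨hn, fun i => dvd_mul_right _ _⟩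
  · rintro ⟨hm, hdvd⟩
    have hD : Dhom d (fun i => m i / d i) = m := funext fun i => Int.mul_ediv_cancel' (hdvd i)
    exact ⟨_, show β (Dhom d _) = 0 by rw [hD]; exact hm, hD⟩

theorem expOf_apply (m : Fin r → ℤ) (i : Fin r) : expOf m i = (m i).toNat := rfl

theorem degOf_sub_degOf (β : (Fin r → ℤ) →+ A) (u v : Fin r →₀ ℕ) :
    degOf β u - degOf β v = β fun i => (u i : ℤ) - v i := by
  rw [degOf, degOf, ← map_sub]
  rfl

theorem isHomog_latticeBinomial (β : (Fin r → ℤ) →+ A) {m : Fin r → ℤ} (hm : β m = 0) :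
    IsHomog β (latticeBinomial K m) := by
  have hdeg : degOf β (expOf (-m)) = degOf β (expOf m) := by
    rw [eq_comm, ← sub_eq_zero, degOf_sub_degOf, ← hm]
    congr 1
    funext i
    simp only [expOf_apply, Pi.neg_apply]
    omega
  refine ⟨degOf β (expOf m), fun e he => ?_⟩
  rcases Finset.mem_union.mp (support_sub _ _ _ he) with h | h <;>
    rw [Finset.mem_singleton.mp (support_monomial_subset h)]
  exact hdeg

theorem monomial_sub_mem_latticeIdeal (L : AddSubgroup (Fin r → ℤ)) (u v : Fin r →₀ ℕ)
    (h : (fun i => (u i : ℤ) - v i) ∈ L) :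
    (monomial u 1 - monomial v 1 : MvPolynomial (Fin r) K) ∈ latticeIdeal K L := by
  have hsplit : (monomial u 1 - monomial v 1 : MvPolynomial (Fin r) K) =
      monomial (u ⊓ v) 1 * latticeBinomial K fun i => (u i : ℤ) - v i := by
    have hu : u ⊓ v + expOf (fun i => (u i : ℤ) - v i) = u := by
      ext i
      simp only [Finsupp.add_apply, Finsupp.inf_apply, expOf_apply]
      omega
    have hv : u ⊓ v + expOf (-fun i => (u i : ℤ) - v i) = v := by
      ext i
      simp only [Finsupp.add_apply, Finsupp.inf_apply, expOf_apply, Pi.neg_apply]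
      omega
    rw [latticeBinomial, mul_sub, monomial_mul, monomial_mul, mul_one, hu, hv]
  rw [hsplit]
  exact Ideal.mul_mem_left _ _ (Ideal.subset_span ⟨_, h, rfl⟩)

theorem charEval_mul (P Q : Fin r → Kˣ) (m : Fin r → ℤ) :
    charEval (P * Q) m = charEval P m * charEval Q m := by
  simp [charEval, mul_zpow, Finset.prod_mul_distrib]

theorem charEval_inv (P : Fin r → Kˣ) (m : Fin r → ℤ) :
    charEval P⁻¹ m = (charEval P m)⁻¹ := by
  simp [charEval]

theorem eval_latticeBinomial_eq_zero {P : Fin r → Kˣ} {m : Fin r → ℤ} (h : charEval P m = 1) :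
    eval (fun i => (P i : K)) (latticeBinomial K m) = 0 := by
  have key : ∏ i, P i ^ expOf m i = charEval P m * ∏ i, P i ^ expOf (-m) i := by
    rw [charEval, ← Finset.prod_mul_distrib]
    refine Finset.prod_congr rfl fun i _ => ?_
    rw [← zpow_natCast, ← zpow_natCast, ← zpow_add]
    congr 1
    simp only [expOf_apply, Pi.neg_apply]
    omega
  rw [h, one_mul] at key
  rw [latticeBinomial, map_sub, sub_eq_zero, eval_monomial, eval_monomial, one_mul, one_mul,
    Finsupp.prod_fintype _ _ fun i => pow_zero _, Finsupp.prod_fintype _ _ fun i => pow_zero _]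
  exact_mod_cast congrArg Units.val key

theorem charEval_eq_one_of_mem_degenerateTorus (β : (Fin r → ℤ) →+ A) {η : Kˣ}
    {a : Fin r → ℤ} {d : Fin r → ℕ} (hd : ∀ i, d i = orderOf (η ^ a i))
    {P t : Fin r → Kˣ} (ht : ∀ i, t i ∈ Subgroup.zpowers η)
    (hP : (QuotientGroup.mk P : (Fin r → Kˣ) ⧸ torusG β) = QuotientGroup.mk fun i => t i ^ a i)
    {m : Fin r → ℤ} (hm : m ∈ AddSubgroup.map (Dhom d) (AddMonoidHom.ker (β.comp (Dhom d)))) :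
    charEval P m = 1 := by
  obtain ⟨hβm, hdvd⟩ := (mem_map_Dhom_ker_iff β d m).mp hm
  have hG : charEval (P⁻¹ * fun i => t i ^ a i) m = 1 := QuotientGroup.eq.mp hP m hβm
  have ht1 : charEval (fun i => t i ^ a i) m = 1 := Finset.prod_eq_one fun i _ => by
    obtain ⟨c, hc⟩ := Subgroup.mem_zpowers_iff.mp (ht i)
    obtain ⟨e, he⟩ := hdvd i
    have hord : (η ^ a i) ^ (d i : ℤ) = 1 := by
      rw [zpow_natCast, hd i]
      exact pow_orderOf_eq_one _
    calc (t i ^ a i) ^ m i = ((η ^ a i) ^ (d i : ℤ)) ^ (c * e) := by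
          rw [← hc, he, ← zpow_mul, ← zpow_mul, ← zpow_mul, ← zpow_mul]
          ring_nf
      _ = 1 := by rw [hord, one_zpow]
  rwa [charEval_mul, charEval_inv, ht1, mul_one, inv_eq_one] at hG

def degenerateTorusParam (η : Kˣ) (a : Fin r → ℤ) :
    Multiplicative (Fin r → ℤ) →* (Fin r → Kˣ) where
  toFun k i := (η ^ k.toAdd i) ^ a i
  map_one' := by funext i; simp
  map_mul' k l := by funext i; simp [zpow_add, mul_zpow]

theorem dvd_sub_of_monomialChar_eq {η : Kˣ} {a : Fin r → ℤ} {d : Fin r → ℕ}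
    (hd : ∀ i, d i = orderOf (η ^ a i)) {u v : Fin r →₀ ℕ}
    (h : monomialChar (degenerateTorusParam η a) u = monomialChar (degenerateTorusParam η a) v)
    (j : Fin r) : (d j : ℤ) ∣ (u j : ℤ) - v j := by
  have hval : ∀ w : Fin r →₀ ℕ, monomialChar (degenerateTorusParam η a) w
      (Multiplicative.ofAdd (Pi.single j 1)) = ((η ^ a j : Kˣ) : K) ^ w j := by
    intro w
    change w.prod _ = _
    rw [Finsupp.prod_fintype _ _ fun i => pow_zero _, Finset.prod_eq_single j]
    · simp [degenerateTorusParam]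
    · intro i _ hij
      simp [degenerateTorusParam, hij]
    · simp
  have huv := DFunLike.congr_fun h (Multiplicative.ofAdd (Pi.single j 1))
  rw [hval, hval] at huv
  rw [hd j, orderOf_dvd_iff_zpow_eq_one, zpow_sub, zpow_natCast, zpow_natCast, mul_inv_eq_one]
  exact Units.ext (by push_cast at huv ⊢; exact huv)

end DegenerateTorus

theorem stmt_10_general {K : Type*} [Field K] {A : Type*} [AddCommGroup A] {r : ℕ}
    (β : (Fin r → ℤ) →+ A)
    (η : Kˣ) (a : Fin r → ℤ)
    (d : Fin r → ℕ) (hd : ∀ i, d i = orderOf (η ^ (a i))) :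
    vanishingIdeal β {y : (Fin r → Kˣ) ⧸ torusG (K := K) β |
        ∃ t : Fin r → Kˣ, (∀ i, t i ∈ Subgroup.zpowers η) ∧
          y = QuotientGroup.mk (fun i => (t i) ^ (a i))} =
      latticeIdeal K
        (AddSubgroup.map (Dhom d) (AddMonoidHom.ker (β.comp (Dhom d)))) := by
  classical
  apply le_antisymm
  · rw [_root_.vanishingIdeal, Ideal.span_le]
    rintro f ⟨⟨α, hf⟩, hfv⟩
    have hvan (k : Multiplicative (Fin r → ℤ)) :
        ∑ u ∈ f.support, coeff u f * monomialChar (degenerateTorusParam η a) u k = 0 :=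
      (eval_eq_sum_monomialChar _ f k).symm.trans
        (hfv _ ⟨fun i => η ^ k.toAdd i, fun i => Subgroup.zpow_mem_zpowers η _, rfl⟩)
    refine mem_of_sum_coeff_fiber_eq_zero f _ (fun u hu v hv huv => ?_)
      (sum_fiber_eq_zero_of_sum_mul_eq_zero hvan)
    refine monomial_sub_mem_latticeIdeal _ u v
      ((mem_map_Dhom_ker_iff β d _).mpr ⟨?_, dvd_sub_of_monomialChar_eq hd huv⟩)
    rw [← degOf_sub_degOf, hf u hu, hf v hv, sub_self]
  · rw [latticeIdeal, Ideal.span_le]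
    rintro _ ⟨m, hm, rfl⟩
    refine Ideal.subset_span ⟨isHomog_latticeBinomial β ((mem_map_Dhom_ker_iff β d m).mp hm).1, ?_⟩
    rintro P ⟨t, ht, hP⟩
    exact eval_latticeBinomial_eq_zero (charEval_eq_one_of_mem_degenerateTorus β hd ht hP hm)

/-- the vanishing ideal of the degenerate torus
`Y = {[t₁^{a₁}:⋯:t_r^{a_r}] : tᵢ ∈ ⟨η⟩}` is the lattice ideal of the lattice
`L = D(L_{βD})`, where `dᵢ` is the order of `η^{aᵢ}` and `D = diag(d₁,…,d_r)`. -/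
theorem stmt_10 {K : Type*} [Field K] {A : Type*} [AddCommGroup A] {r : ℕ}
    (β : (Fin r → ℤ) →+ A) (hβ : Function.Surjective β)
    (η : Kˣ) (hη : IsOfFinOrder η) (a : Fin r → ℤ)
    (d : Fin r → ℕ) (hd : ∀ i, d i = orderOf (η ^ (a i))) :
    vanishingIdeal β {y : (Fin r → Kˣ) ⧸ torusG (K := K) β |
        ∃ t : Fin r → Kˣ, (∀ i, t i ∈ Subgroup.zpowers η) ∧
          y = QuotientGroup.mk (fun i => (t i) ^ (a i))} =
      latticeIdeal K
        (AddSubgroup.map (Dhom d) (AddMonoidHom.ker (β.comp (Dhom d)))) :=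
  stmt_10_general β η a d hd
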